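/- arXiv:2311.10649 — 2 statements merged into one kernel-verified Lean document; each statement's English description precedes it below -/
import Mathlib

section
/- Let A and B be finite types and let k ≥ 2 be an integer. Every element σ of PPT_k(A:B) satisfies tr σ ≤ 1 (i.e., all elements of PPT_k are sub-normalized states). -/
open Matrix
open scoped ComplexOrder

/-- Total positive semidefinite square root: the PSD square root of `M` if `M` is PSD,
and junk value `0` otherwise. -/
noncomputable def msqrt {n : Type*} [Fintype n] [DecidableEq n]
    (M : Matrix n n ℂ) : Matrix n n ℂ :=
  letI := Classical.dec M.PosSemidef
  if h : M.PosSemidef then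
    (h.1.eigenvectorUnitary : Matrix n n ℂ) * diagonal ((↑) ∘ (fun i => Real.sqrt (h.1.eigenvalues i)))
      * (star h.1.eigenvectorUnitary : Matrix n n ℂ) else 0

/-- The trace norm `‖M‖₁ = tr √(Mᴴ M)` of a complex matrix, as a real number. -/
noncomputable def traceNorm {n : Type*} [Fintype n] [DecidableEq n]
    (M : Matrix n n ℂ) : ℝ :=
  (msqrt (Mᴴ * M)).trace.re

/-- The partial transpose over the second party `B`:
`M^{T_B}((a,b),(a',b')) = M((a,b'),(a',b))`. -/
def ptB {A B : Type*} (M : Matrix (A × B) (A × B) ℂ) : Matrix (A × B) (A × B) ℂ :=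
  fun x y => M (x.1, y.2) (y.1, x.2)

/-- The set `PPT_k(A:B)`: positive semidefinite `ω₁` such that there exist `ω₂, …, ω_k` with
`−ω_{i+1} ⪯ ω_i^{T_B} ⪯ ω_{i+1}` for all `1 ≤ i ≤ k−1` and `‖ω_k^{T_B}‖₁ ≤ 1`. -/
def PPTset {A B : Type*} [Fintype A] [Fintype B] [DecidableEq A] [DecidableEq B]
    (k : ℕ) : Set (Matrix (A × B) (A × B) ℂ) :=
  {σ | σ.PosSemidef ∧ ∃ ω : ℕ → Matrix (A × B) (A × B) ℂ, ω 1 = σ ∧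
    (∀ i, 1 ≤ i → i ≤ k - 1 →
      (ω (i + 1) - ptB (ω i)).PosSemidef ∧ (ω (i + 1) + ptB (ω i)).PosSemidef) ∧
    traceNorm (ptB (ω k)) ≤ 1}

open scoped MatrixOrder

/-!
Telescoping `tr ω_{i+1} − tr ω_i = tr (ω_{i+1} − ω_i^{T_B}) ≥ 0` along the chain gives
`tr σ ≤ tr ω_k`. The last link also makes `ω_k` Hermitian, so
`tr ω_k = tr ω_k^{T_B} = ∑ λᵢ ≤ ∑ |λᵢ| = ‖ω_k^{T_B}‖₁ ≤ 1`, with `λᵢ` the eigenvalues of `ω_k^{T_B}`.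
-/

theorem IsSelfAdjoint.of_sub_of_add {R : Type*} [AddCommGroup R] [StarAddMonoid R] [Module ℝ R]
    [StarModule ℝ R] {a b : R} (hsub : IsSelfAdjoint (a - b)) (hadd : IsSelfAdjoint (a + b)) :
    IsSelfAdjoint a := by
  have h := (IsSelfAdjoint.all (1 / 2 : ℝ)).smul (hsub.add hadd)
  rwa [show (1 / 2 : ℝ) • (a - b + (a + b)) = a by module] at h

namespace Matrix

variable {n 𝕜 : Type*} [Fintype n] [DecidableEq n] [RCLike 𝕜]

theorem IsHermitian.trace_cfc {A : Matrix n n 𝕜} (hA : A.IsHermitian) (f : ℝ → ℝ) :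
    (cfc f A).trace = ∑ i, (f (hA.eigenvalues i) : 𝕜) := by
  rw [hA.cfc_eq, IsHermitian.cfc, Unitary.conjStarAlgAut_apply, trace_mul_cycle,
    Unitary.coe_star_mul_self, one_mul, trace_diagonal]
  rfl

theorem IsHermitian.re_trace_le_re_trace_abs {A : Matrix n n 𝕜} (hA : A.IsHermitian) :
    RCLike.re A.trace ≤ RCLike.re (CFC.abs A).trace := by
  rw [CFC.abs_eq_cfc_norm A hA.isSelfAdjoint, hA.trace_cfc, hA.trace_eq_sum_eigenvalues]
  simp only [map_sum, RCLike.ofReal_re, Real.norm_eq_abs]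
  exact Finset.sum_le_sum fun i _ => le_abs_self _

end Matrix

section TraceNorm

variable {n : Type*} [Fintype n] [DecidableEq n]

theorem msqrt_eq_cfcSqrt {M : Matrix n n ℂ} (hM : M.PosSemidef) : msqrt M = CFC.sqrt M := by
  rw [msqrt, dif_pos hM, CFC.sqrt_eq_real_sqrt M hM.nonneg,
    cfcₙ_eq_cfc (hf := Real.continuous_sqrt.continuousOn) (hf0 := Real.sqrt_zero), hM.1.cfc_eq]
  rfl

theorem traceNorm_eq_re_trace_abs (M : Matrix n n ℂ) : traceNorm M = (CFC.abs M).trace.re := by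
  rw [traceNorm, msqrt_eq_cfcSqrt M.posSemidef_conjTranspose_mul_self]
  rfl

theorem Matrix.IsHermitian.re_trace_le_traceNorm {M : Matrix n n ℂ} (hM : M.IsHermitian) :
    M.trace.re ≤ traceNorm M :=
  traceNorm_eq_re_trace_abs M ▸ hM.re_trace_le_re_trace_abs

end TraceNorm

section PartialTranspose

variable {A B : Type*}

@[simp]
theorem trace_ptB [Fintype A] [Fintype B] (M : Matrix (A × B) (A × B) ℂ) :
    (ptB M).trace = M.trace := by
  simp [Matrix.trace, ptB]

theorem Matrix.IsHermitian.ptB {M : Matrix (A × B) (A × B) ℂ} (hM : M.IsHermitian) :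
    (ptB M).IsHermitian := by
  ext ⟨a, b⟩ ⟨a', b'⟩
  simpa [Matrix.conjTranspose_apply, _root_.ptB] using congr_fun₂ hM (a, b') (a', b)

theorem re_trace_le_of_posSemidef_sub_ptB [Fintype A] [Fintype B] {M N : Matrix (A × B) (A × B) ℂ}
    (h : (N - ptB M).PosSemidef) : M.trace.re ≤ N.trace.re := by
  have h := h.trace_nonneg
  rw [Matrix.trace_sub, trace_ptB, sub_nonneg] at h
  exact (Complex.le_def.mp h).1

end PartialTranspose

theorem trace_le_one_of_mem_PPTset {A B : Type*}
    [Fintype A] [Fintype B] [DecidableEq A] [DecidableEq B]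
    (k : ℕ) (hk : 2 ≤ k) (σ : Matrix (A × B) (A × B) ℂ)
    (hσ : σ ∈ PPTset (A := A) (B := B) k) :
    σ.trace.re ≤ 1 := by
  obtain ⟨-, ω, rfl, hchain, hnorm⟩ := hσ
  have hmono : MonotoneOn (fun i => (ω i).trace.re) (Set.Icc 1 k) :=
    monotoneOn_of_le_succ Set.ordConnected_Icc fun i _ hi hi' =>
      re_trace_le_of_posSemidef_sub_ptB
        (hchain i hi.1 (Nat.le_sub_one_of_lt (Order.succ_le_iff.mp hi'.2))).1
  have hherm : (ω k).IsHermitian := by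
    obtain ⟨hsub, hadd⟩ := hchain (k - 1) (by omega) le_rfl
    rw [Nat.sub_add_cancel (by omega)] at hsub hadd
    exact IsSelfAdjoint.of_sub_of_add hsub.1 hadd.1
  calc (ω 1).trace.re ≤ (ω k).trace.re := hmono ⟨le_rfl, by omega⟩ ⟨by omega, le_rfl⟩ (by omega)
    _ = (ptB (ω k)).trace.re := by rw [trace_ptB]
    _ ≤ traceNorm (ptB (ω k)) := hherm.ptB.re_trace_le_traceNorm
    _ ≤ 1 := hnorm
end

section
/- Let A, B, C, D be square complex matrices (A of one size, C possibly of another) with A and C Hermitian. If −B ⪯ A ⪯ B and −D ⪯ C ⪯ D, then −(B ⊗ D) ⪯ A ⊗ C ⪯ B ⊗ D, where ⊗ denotes the Kronecker product and X ⪯ Y means Y − X is positive semidefinite. -/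
open Matrix
open scoped ComplexOrder Kronecker

namespace Matrix

variable {R 𝕜 : Type*} {m n : Type*}

theorem two_nsmul_kronecker_sub_kronecker [CommRing R] (A B : Matrix m m R) (C D : Matrix n n R) :
    2 • (B ⊗ₖ D - A ⊗ₖ C) = (B - A) ⊗ₖ (D + C) + (B + A) ⊗ₖ (D - C) := by
  ext ⟨i, j⟩ ⟨k, l⟩
  simp only [smul_apply, sub_apply, add_apply, kroneckerMap_apply, nsmul_eq_mul]
  ring

theorem two_nsmul_kronecker_add_kronecker [CommRing R] (A B : Matrix m m R) (C D : Matrix n n R) :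
    2 • (B ⊗ₖ D + A ⊗ₖ C) = (B - A) ⊗ₖ (D - C) + (B + A) ⊗ₖ (D + C) := by
  ext ⟨i, j⟩ ⟨k, l⟩
  simp only [smul_apply, sub_apply, add_apply, kroneckerMap_apply, nsmul_eq_mul]
  ring

theorem PosSemidef.of_two_nsmul [RCLike 𝕜] {M : Matrix m m 𝕜} (h : (2 • M).PosSemidef) :
    M.PosSemidef := by
  have hM : M = (2⁻¹ : ℝ) • 2 • M := by
    rw [← Nat.cast_smul_eq_nsmul ℝ, smul_smul]
    norm_num
  rw [hM]
  exact h.smul (by norm_num)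

end Matrix

theorem kronecker_loewner_sandwich_general {m n : Type*} [Fintype m] [Fintype n]
    (A B : Matrix m m ℂ) (C D : Matrix n n ℂ)
    (hBA₁ : (B - A).PosSemidef) (hBA₂ : (B + A).PosSemidef)
    (hDC₁ : (D - C).PosSemidef) (hDC₂ : (D + C).PosSemidef) :
    (B ⊗ₖ D - A ⊗ₖ C).PosSemidef ∧ (B ⊗ₖ D + A ⊗ₖ C).PosSemidef := by
  constructor
  · apply PosSemidef.of_two_nsmul
    rw [two_nsmul_kronecker_sub_kronecker]
    exact (hBA₁.kronecker hDC₂).add (hBA₂.kronecker hDC₁)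
  · apply PosSemidef.of_two_nsmul
    rw [two_nsmul_kronecker_add_kronecker]
    exact (hBA₁.kronecker hDC₁).add (hBA₂.kronecker hDC₂)

theorem kronecker_loewner_sandwich {m n : Type*} [Fintype m] [Fintype n]
    (A B : Matrix m m ℂ) (C D : Matrix n n ℂ)
    (hA : A.IsHermitian) (hC : C.IsHermitian)
    (hBA₁ : (B - A).PosSemidef) (hBA₂ : (B + A).PosSemidef)
    (hDC₁ : (D - C).PosSemidef) (hDC₂ : (D + C).PosSemidef) :
    (B ⊗ₖ D - A ⊗ₖ C).PosSemidef ∧ (B ⊗ₖ D + A ⊗ₖ C).PosSemidef :=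
  kronecker_loewner_sandwich_general A B C D hBA₁ hBA₂ hDC₁ hDC₂
end
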